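/- Let F be a subset of ℝ^d. Then: (a) the restriction of 𝔡 to F × Ω is injective if and only if F ∩ (F + k) = ∅ for every k ∈ ℤ^d with k ≠ 0; and (b) the restriction of 𝔡 to F × Ω is onto S_A if and only if ⋃_{k∈ℤ^d} (F + k) = ℝ^d. -/

import Mathlib

open Matrix MeasureTheory Filter Topology

noncomputable section

/-- The integer lattice ℤ^d inside ℝ^d. -/
def intLattice (d : ℕ) : AddSubgroup (Fin d → ℝ) where
  carrier := {x | ∀ i, ∃ k : ℤ, x i = (k : ℝ)}
  zero_mem' := fun i => ⟨0, by simp⟩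
  add_mem' := by
    intro x y hx hy i
    obtain ⟨a, ha⟩ := hx i
    obtain ⟨b, hb⟩ := hy i
    exact ⟨a + b, by simp [ha, hb]⟩
  neg_mem' := by
    intro x hx i
    obtain ⟨a, ha⟩ := hx i
    exact ⟨-a, by simp [ha]⟩

/-- The torus ℝ^d / ℤ^d. -/
abbrev Torus (d : ℕ) := (Fin d → ℝ) ⧸ intLattice d

/-- The quotient homomorphism π : ℝ^d → 𝕋^d. -/
def torusMk (d : ℕ) : (Fin d → ℝ) →+ Torus d := QuotientAddGroup.mk' (intLattice d)

/-- A square integer matrix is expansive if all of its complex eigenvalues `μ`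
satisfy `|μ| > 1`. -/
def Expansive {d : ℕ} (A : Matrix (Fin d) (Fin d) ℤ) : Prop :=
  ∀ μ : ℂ, (Matrix.charpoly (A.map (Int.cast : ℤ → ℂ))).IsRoot μ → 1 < ‖μ‖

/-- The real matrix associated to an integer matrix. -/
def toR {d : ℕ} (A : Matrix (Fin d) (Fin d) ℤ) : Matrix (Fin d) (Fin d) ℝ :=
  A.map (Int.cast : ℤ → ℝ)

lemma latticeMap_aux {d : ℕ} (M : Matrix (Fin d) (Fin d) ℤ) :
    intLattice d ≤ (intLattice d).comap (toR M).mulVecLin.toAddMonoidHom := by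
  intro x hx
  choose k hk using hx
  intro i
  refine ⟨∑ j, M i j * k j, ?_⟩
  have : (toR M).mulVecLin.toAddMonoidHom x i = ∑ j, (M i j : ℝ) * (k j : ℝ) := by
    simp [toR, Matrix.mulVec, dotProduct, hk, Matrix.map_apply]
  rw [this]
  push_cast
  ring

/-- The endomorphism of the torus induced by an integer matrix. -/
def torusHom {d : ℕ} (M : Matrix (Fin d) (Fin d) ℤ) : Torus d →+ Torus d :=
  QuotientAddGroup.map _ _ (toR M).mulVecLin.toAddMonoidHom (latticeMap_aux M)

/-- The solenoid `S_A`, as an additive subgroup of `(𝕋^d)^ℕ`. -/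
def solenoid {d : ℕ} (A : Matrix (Fin d) (Fin d) ℤ) : AddSubgroup (ℕ → Torus d) where
  carrier := {z | ∀ n, torusHom Aᵀ (z (n + 1)) = z n}
  zero_mem' := by intro n; simp
  add_mem' := by
    intro a b ha hb n
    simp only [Pi.add_apply, map_add, ha n, hb n]
  neg_mem' := by
    intro a ha n
    simp only [Pi.neg_apply, map_neg, ha n]

/-- The shift automorphism σ_A of the solenoid (written on the ambient space). -/
def sigmaA {d : ℕ} (A : Matrix (Fin d) (Fin d) ℤ) (z : ℕ → Torus d) : ℕ → Torus d
  | 0 => torusHom Aᵀ (z 0)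
  | n + 1 => z n

/-- The embedding î : ℝ^d → S_A, î(x) = (π((Aᵀ)^{-n} x))ₙ. -/
def ihat {d : ℕ} (A : Matrix (Fin d) (Fin d) ℤ) (x : Fin d → ℝ) : ℕ → Torus d :=
  fun n => torusMk d ((((toR A)ᵀ)⁻¹ ^ n).mulVec x)

end

/-- D is a complete set of representatives of ℤ^d / Aᵀℤ^d. -/
def CompleteDigits {d : ℕ} (A : Matrix (Fin d) (Fin d) ℤ) (D : Set (Fin d → ℤ)) : Prop :=
  ∀ x : Fin d → ℤ, ∃! v : Fin d → ℤ, v ∈ D ∧ ∃ y : Fin d → ℤ, x - v = Aᵀ.mulVec y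

/-- The affine map τ_v(x) = (Aᵀ)⁻¹(x + v) for a digit v ∈ ℤ^d. -/
noncomputable def tauD {d : ℕ} (A : Matrix (Fin d) (Fin d) ℤ) (v : Fin d → ℤ)
    (x : Fin d → ℝ) : Fin d → ℝ :=
  (((toR A)ᵀ)⁻¹).mulVec (x + fun i => (v i : ℝ))

/-- The attractor X(Aᵀ, D) = { ∑_{j≥1} (Aᵀ)^{−j} d_j : d_j ∈ D }. -/
def attractor (d : ℕ) (A : Matrix (Fin d) (Fin d) ℤ) (D : Set (Fin d → ℤ)) :
    Set (Fin d → ℝ) :=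
  {x | ∃ dig : ℕ → Fin d → ℤ, (∀ j, dig j ∈ D) ∧
    HasSum (fun j : ℕ => ((((toR A)ᵀ)⁻¹) ^ (j + 1)).mulVec fun i => (dig j i : ℝ)) x}

/-- Iterated maps: tauWord ω n = τ_{ω_{n−1}} ∘ ⋯ ∘ τ_{ω_0} (identity for n = 0). -/
noncomputable def tauWord {d : ℕ} (A : Matrix (Fin d) (Fin d) ℤ)
    (ω : ℕ → Fin d → ℤ) : ℕ → (Fin d → ℝ) → Fin d → ℝ
  | 0 => fun x => x
  | n + 1 => fun x => tauD A (ω n) (tauWord A ω n x)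

/-- The decoding map 𝔡 : ℝ^d × Ω → S_A, 𝔡(x,ω)_n = π(τ_{ω_{n−1}}⋯τ_{ω_0} x). -/
noncomputable def codeMap {d : ℕ} (A : Matrix (Fin d) (Fin d) ℤ)
    (x : Fin d → ℝ) (ω : ℕ → Fin d → ℤ) : ℕ → Torus d :=
  fun n => torusMk d (tauWord A ω n x)

/-!
Since `𝔡(x, ω)₀ = π x`, both parts reduce to two facts about a fixed `x`. First, `ω` is recovered
from `𝔡(x, ω)`: applying `Aᵀ` to `τ_v t` gives `t + v`, so `π (τ_v t)` determines `v` modulo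
`Aᵀℤ^d`, and `D` has one digit per class. Second, every `z ∈ S_A` with `z₀ = π x` equals
`𝔡(x, ω)` for some `ω ∈ Ω`: the points of `𝕋^d` mapped to `π t` by `Ā` are exactly the `π (τ_v t)`
with `v ∈ D`, so the digits can be chosen one at a time. Hence `𝔡` is injective on, resp. maps onto
`S_A` from, `F × Ω` exactly when `π` is injective on, resp. maps onto `𝕋^d` from, `F`; these are
the two lattice conditions.
-/

open Set

section Lattice

variable {d : ℕ}

def latticeVec (d : ℕ) : (Fin d → ℤ) →+ (Fin d → ℝ) :=
  (Int.castAddHom ℝ).compLeft (Fin d)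

@[simp]
lemma latticeVec_apply (k : Fin d → ℤ) (i : Fin d) : latticeVec d k i = k i := rfl

lemma latticeVec_injective : Function.Injective (latticeVec d) := fun k k' h =>
  funext fun i => by simpa using congrFun h i

lemma toR_mulVec_latticeVec (M : Matrix (Fin d) (Fin d) ℤ) (k : Fin d → ℤ) :
    toR M *ᵥ latticeVec d k = latticeVec d (M *ᵥ k) := by
  funext i
  simp [toR, mulVec, dotProduct]

lemma mem_intLattice_iff {x : Fin d → ℝ} : x ∈ intLattice d ↔ ∃ k, latticeVec d k = x :=
  ⟨fun h => by choose k hk using h; exact ⟨k, funext fun i => (hk i).symm⟩,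
    by rintro ⟨k, rfl⟩ i; exact ⟨k i, rfl⟩⟩

lemma torusMk_surjective : Function.Surjective (torusMk d) :=
  QuotientAddGroup.mk'_surjective _

lemma torusMk_eq_torusMk_iff {x y : Fin d → ℝ} :
    torusMk d x = torusMk d y ↔ ∃ k, x + latticeVec d k = y := by
  simp only [torusMk, QuotientAddGroup.mk'_apply, QuotientAddGroup.eq, mem_intLattice_iff,
    eq_neg_add_iff_add_eq]

lemma injOn_torusMk_iff (F : Set (Fin d → ℝ)) :
    InjOn (torusMk d) F ↔ ∀ k, k ≠ 0 → F ∩ ((· + latticeVec d k) '' F) = ∅ := by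
  constructor
  · rintro hF k hk
    refine eq_empty_iff_forall_notMem.2 ?_
    rintro _ ⟨hx, y, hy, rfl⟩
    have hyy : y = y + latticeVec d k := hF hy hx (torusMk_eq_torusMk_iff.2 ⟨k, rfl⟩)
    exact hk (latticeVec_injective (by simpa using hyy))
  · intro hF x hx y hy hxy
    obtain ⟨k, rfl⟩ := torusMk_eq_torusMk_iff.1 hxy
    obtain rfl | hk := eq_or_ne k 0
    · simp
    · exact absurd (hF k hk) (nonempty_iff_ne_empty.1 ⟨_, hy, x, hx, rfl⟩)

lemma image_torusMk_eq_univ_iff (F : Set (Fin d → ℝ)) :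
    torusMk d '' F = univ ↔ ⋃ k, (· + latticeVec d k) '' F = univ := by
  simp only [eq_univ_iff_forall]
  constructor
  · intro hF x
    obtain ⟨y, hy, hyx⟩ := hF (torusMk d x)
    obtain ⟨k, hk⟩ := torusMk_eq_torusMk_iff.1 hyx
    exact mem_iUnion.2 ⟨k, y, hy, hk⟩
  · intro hF t
    obtain ⟨x, rfl⟩ := torusMk_surjective t
    obtain ⟨k, y, hy, rfl⟩ := mem_iUnion.1 (hF x)
    exact ⟨y, hy, torusMk_eq_torusMk_iff.2 ⟨k, rfl⟩⟩

end Lattice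

section Digits

variable {d : ℕ} {A : Matrix (Fin d) (Fin d) ℤ} {D : Set (Fin d → ℤ)}

lemma Expansive.det_ne_zero (hA : Expansive A) : A.det ≠ 0 := by
  intro h
  have hroot : (A.map (Int.cast : ℤ → ℂ)).charpoly.IsRoot 0 := by
    rw [Polynomial.IsRoot, eval_charpoly, map_zero, zero_sub, det_neg, ← Int.cast_det, h]
    simp
  have := hA 0 hroot
  norm_num at this

lemma toR_transpose (M : Matrix (Fin d) (Fin d) ℤ) : toR Mᵀ = (toR M)ᵀ :=
  transpose_map

lemma isUnit_det_toR_transpose (hA : A.det ≠ 0) : IsUnit (toR A)ᵀ.det := by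
  rw [det_transpose, toR, ← Int.cast_det]
  exact isUnit_iff_ne_zero.2 (Int.cast_ne_zero.2 hA)

lemma tauD_apply (A : Matrix (Fin d) (Fin d) ℤ) (v : Fin d → ℤ) (x : Fin d → ℝ) :
    tauD A v x = (toR A)ᵀ⁻¹ *ᵥ (x + latticeVec d v) := rfl

lemma mulVec_tauD (hA : A.det ≠ 0) (v : Fin d → ℤ) (x : Fin d → ℝ) :
    (toR A)ᵀ *ᵥ tauD A v x = x + latticeVec d v := by
  rw [tauD_apply, mulVec_mulVec, mul_nonsing_inv _ (isUnit_det_toR_transpose hA), one_mulVec]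

lemma torusHom_torusMk (M : Matrix (Fin d) (Fin d) ℤ) (x : Fin d → ℝ) :
    torusHom M (torusMk d x) = torusMk d (toR M *ᵥ x) := rfl

lemma torusHom_transpose_torusMk_tauD (hA : A.det ≠ 0) (v : Fin d → ℤ) (x : Fin d → ℝ) :
    torusHom Aᵀ (torusMk d (tauD A v x)) = torusMk d x := by
  rw [torusHom_torusMk, toR_transpose, mulVec_tauD hA, torusMk_eq_torusMk_iff]
  exact ⟨-v, by simp⟩

lemma codeMap_mem_solenoid (hA : A.det ≠ 0) (x : Fin d → ℝ) (ω : ℕ → Fin d → ℤ) :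
    codeMap A x ω ∈ solenoid A := fun n =>
  torusHom_transpose_torusMk_tauD hA (ω n) (tauWord A ω n x)

lemma CompleteDigits.eq_of_sub_eq_mulVec (hD : CompleteDigits A D) {v v' m : Fin d → ℤ}
    (hv : v ∈ D) (hv' : v' ∈ D) (h : v - v' = Aᵀ *ᵥ m) : v = v' :=
  (hD v).unique ⟨hv, 0, by simp⟩ ⟨hv', m, h⟩

lemma CompleteDigits.eq_of_torusMk_tauD_eq (hA : A.det ≠ 0) (hD : CompleteDigits A D)
    {v v' : Fin d → ℤ} (hv : v ∈ D) (hv' : v' ∈ D) {t : Fin d → ℝ}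
    (h : torusMk d (tauD A v t) = torusMk d (tauD A v' t)) : v = v' := by
  obtain ⟨k, hk⟩ := torusMk_eq_torusMk_iff.1 h
  have hB := congrArg ((toR A)ᵀ *ᵥ ·) hk
  simp only [mulVec_add, mulVec_tauD hA] at hB
  rw [← toR_transpose, toR_mulVec_latticeVec] at hB
  refine (hD.eq_of_sub_eq_mulVec hv' hv (m := k) (latticeVec_injective ?_)).symm
  rw [map_sub, sub_eq_iff_eq_add', ← add_right_inj t, ← hB]
  abel

lemma CompleteDigits.exists_torusMk_tauD_eq (hA : A.det ≠ 0) (hD : CompleteDigits A D)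
    {y : Fin d → ℝ} {w : Torus d} (hw : torusHom Aᵀ w = torusMk d y) :
    ∃ v ∈ D, torusMk d (tauD A v y) = w := by
  obtain ⟨u, rfl⟩ := torusMk_surjective w
  rw [torusHom_torusMk, toR_transpose, torusMk_eq_torusMk_iff] at hw
  obtain ⟨k, hk⟩ := hw
  obtain ⟨v, ⟨hv, m, hm⟩, -⟩ := hD (-k)
  have hyv : y + latticeVec d v = (toR A)ᵀ *ᵥ (u - latticeVec d m) := by
    rw [← hk, mulVec_sub, ← toR_transpose, toR_mulVec_latticeVec, ← hm]
    simp only [map_sub, map_neg]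
    abel
  refine ⟨v, hv, torusMk_eq_torusMk_iff.2 ⟨m, ?_⟩⟩
  rw [tauD_apply, hyv, mulVec_mulVec, nonsing_inv_mul _ (isUnit_det_toR_transpose hA), one_mulVec]
  abel

lemma exists_forall_tauWord {P : ℕ → (Fin d → ℝ) → Prop} {x : Fin d → ℝ} (hx : P 0 x)
    (hstep : ∀ n y, P n y → ∃ v ∈ D, P (n + 1) (tauD A v y)) :
    ∃ ω : ℕ → Fin d → ℤ, (∀ n, ω n ∈ D) ∧ ∀ n, P n (tauWord A ω n x) := by
  choose V hVD hV using fun n (y : {y // P n y}) => hstep n y y.2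
  let y : ∀ n, {y // P n y} := fun n =>
    Nat.rec (motive := fun n => {y // P n y}) ⟨x, hx⟩ (fun n yn => ⟨tauD A (V n yn) yn, hV n yn⟩) n
  have hy : ∀ n, tauWord A (fun n => V n (y n)) n x = y n := by
    intro n
    induction n with
    | zero => rfl
    | succ n ih => simp only [tauWord, ih]; rfl
  exact ⟨fun n => V n (y n), fun n => hVD n (y n), fun n => hy n ▸ (y n).2⟩

lemma CompleteDigits.exists_codeMap_eq (hA : A.det ≠ 0) (hD : CompleteDigits A D)
    {z : ℕ → Torus d} (hz : z ∈ solenoid A) {x : Fin d → ℝ} (hx : torusMk d x = z 0) :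
    ∃ ω : ℕ → Fin d → ℤ, (∀ n, ω n ∈ D) ∧ codeMap A x ω = z := by
  obtain ⟨ω, hω, h⟩ := exists_forall_tauWord (P := fun n y => torusMk d y = z n) hx
    fun n _ hy => hD.exists_torusMk_tauD_eq hA ((hz n).trans hy.symm)
  exact ⟨ω, hω, funext h⟩

lemma CompleteDigits.eq_of_codeMap_eq (hA : A.det ≠ 0) (hD : CompleteDigits A D)
    {x : Fin d → ℝ} {ω ω' : ℕ → Fin d → ℤ} (hω : ∀ n, ω n ∈ D) (hω' : ∀ n, ω' n ∈ D)
    (h : codeMap A x ω = codeMap A x ω') : ω = ω' := by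
  have digit : ∀ n, tauWord A ω n x = tauWord A ω' n x → ω n = ω' n := fun n hn =>
    hD.eq_of_torusMk_tauD_eq hA (hω n) (hω' n) (t := tauWord A ω n x) <| by
      simpa only [codeMap, tauWord, hn] using congrFun h (n + 1)
  have word : ∀ n, tauWord A ω n x = tauWord A ω' n x := by
    intro n
    induction n with
    | zero => rfl
    | succ n ih => simp only [tauWord, ih, digit n ih]
  exact funext fun n => digit n (word n)

end Digits

section CodeMap

variable {d : ℕ} {A : Matrix (Fin d) (Fin d) ℤ} {D : Set (Fin d → ℤ)}

theorem injOn_codeMap_iff (hA : A.det ≠ 0) (hD : CompleteDigits A D) (F : Set (Fin d → ℝ)) :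
    InjOn (fun q : (Fin d → ℝ) × (ℕ → Fin d → ℤ) => codeMap A q.1 q.2)
        (F ×ˢ {ω | ∀ n, ω n ∈ D}) ↔ InjOn (torusMk d) F := by
  constructor
  · intro h x hx y hy hxy
    obtain ⟨v, hv, -⟩ := (hD 0).exists
    obtain ⟨ω, hω, hyω⟩ :=
      hD.exists_codeMap_eq hA (codeMap_mem_solenoid hA x fun _ => v) hxy.symm
    exact congrArg Prod.fst (h (mk_mem_prod hx fun _ => hv) (mk_mem_prod hy hω) hyω.symm)
  · rintro hF ⟨x, ω⟩ ⟨hx, hω⟩ ⟨y, ω'⟩ ⟨hy, hω'⟩ h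
    obtain rfl : x = y := hF hx hy (congrFun h 0)
    rw [show ω = ω' from hD.eq_of_codeMap_eq hA hω hω' h]

theorem image_codeMap_eq_solenoid_iff (hA : A.det ≠ 0) (hD : CompleteDigits A D)
    (F : Set (Fin d → ℝ)) :
    (fun q : (Fin d → ℝ) × (ℕ → Fin d → ℤ) => codeMap A q.1 q.2) '' (F ×ˢ {ω | ∀ n, ω n ∈ D}) =
      (solenoid A : Set (ℕ → Torus d)) ↔ torusMk d '' F = univ := by
  constructor
  · intro h
    refine eq_univ_of_forall fun t => ?_
    obtain ⟨x, rfl⟩ := torusMk_surjective t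
    have hx : codeMap A x 0 ∈ (solenoid A : Set (ℕ → Torus d)) := codeMap_mem_solenoid hA x 0
    rw [← h] at hx
    obtain ⟨⟨y, ω⟩, ⟨hy, -⟩, hyx⟩ := hx
    exact ⟨y, hy, congrFun hyx 0⟩
  · intro h
    refine Subset.antisymm ?_ fun z hz => ?_
    · rintro _ ⟨⟨x, ω⟩, -, rfl⟩
      exact codeMap_mem_solenoid hA x ω
    · obtain ⟨x, hx, hxz⟩ : z 0 ∈ torusMk d '' F := h ▸ mem_univ _
      obtain ⟨ω, hω, rfl⟩ := hD.exists_codeMap_eq hA hz hxz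
      exact ⟨(x, ω), ⟨hx, hω⟩, rfl⟩

end CodeMap

theorem statement10_general (d : ℕ) (A : Matrix (Fin d) (Fin d) ℤ)
    (hA : Expansive A) (D : Set (Fin d → ℤ)) (hD : CompleteDigits A D)
    (F : Set (Fin d → ℝ)) :
    (Set.InjOn (fun q : (Fin d → ℝ) × (ℕ → Fin d → ℤ) => codeMap A q.1 q.2)
        (F ×ˢ {ω : ℕ → Fin d → ℤ | ∀ n, ω n ∈ D}) ↔
      ∀ k : Fin d → ℤ, k ≠ 0 →
        F ∩ ((fun y => y + fun i => (k i : ℝ)) '' F) = ∅) ∧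
    ((fun q : (Fin d → ℝ) × (ℕ → Fin d → ℤ) => codeMap A q.1 q.2) ''
        (F ×ˢ {ω : ℕ → Fin d → ℤ | ∀ n, ω n ∈ D}) = (solenoid A : Set (ℕ → Torus d)) ↔
      (⋃ k : Fin d → ℤ, (fun y => y + fun i => (k i : ℝ)) '' F) = Set.univ) := by
  rw [injOn_codeMap_iff hA.det_ne_zero hD, image_codeMap_eq_solenoid_iff hA.det_ne_zero hD]
  exact ⟨injOn_torusMk_iff F, image_torusMk_eq_univ_iff F⟩

/-- (a) 𝔡 is injective on F × Ω iff F ∩ (F + k) = ∅ for all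
nonzero k ∈ ℤ^d; (b) 𝔡 maps F × Ω onto S_A iff the ℤ^d-translates of F
cover ℝ^d. -/
theorem statement10 (d : ℕ) (hd : 0 < d) (A : Matrix (Fin d) (Fin d) ℤ)
    (hA : Expansive A) (D : Set (Fin d → ℤ)) (hD : CompleteDigits A D)
    (F : Set (Fin d → ℝ)) :
    (Set.InjOn (fun q : (Fin d → ℝ) × (ℕ → Fin d → ℤ) => codeMap A q.1 q.2)
        (F ×ˢ {ω : ℕ → Fin d → ℤ | ∀ n, ω n ∈ D}) ↔
      ∀ k : Fin d → ℤ, k ≠ 0 →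
        F ∩ ((fun y => y + fun i => (k i : ℝ)) '' F) = ∅) ∧
    ((fun q : (Fin d → ℝ) × (ℕ → Fin d → ℤ) => codeMap A q.1 q.2) ''
        (F ×ˢ {ω : ℕ → Fin d → ℤ | ∀ n, ω n ∈ D}) = (solenoid A : Set (ℕ → Torus d)) ↔
      (⋃ k : Fin d → ℤ, (fun y => y + fun i => (k i : ℝ)) '' F) = Set.univ) :=
  statement10_general d A hA D hD F
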